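/- Let A, B be real numbers with 3 < A < B, and let a_0 be an integer with a_0 > (A+1)(A−1)^{-1}(B−A)^{-1}. Fix an integer a_1 with a_0·A + (A−1)^{-1} < a_1 < a_0·B − (A−1)^{-1}, fix f : ℤ⁺ → {0,1}, and define a_{n+1} = ⌊a_n²/a_{n−1}⌋ + f(n) for n ≥ 1. Then α = lim a_{n+1}/a_n exists, lies in [A, B], λ = lim a_n·α^{−n} exists and is positive, and |a_n − λα^n| ≤ (A−1)^{-1}(α−1)^{-1} for all n ≥ 0; in particular ‖λα^n‖ ≤ (A−1)^{-1}(α−1)^{-1} for all n ≥ 0. -/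

import Mathlib

/-!
Write `r n = a (n + 1) / a n`. Since `a (n + 2)` is within `1` of `a (n + 1) ^ 2 / a n`, consecutive
ratios satisfy `|r (n + 1) - r n| ≤ 1 / a (n + 1)`. As long as the ratios exceed `A`, the terms grow
at least like `a 0 * A ^ n`, so the total drift of the ratios is at most
`∑ 1 / (a 0 * A ^ (k + 1)) ≤ (A - 1)⁻¹ / a 0`; the margin `(A - 1)⁻¹` in the choice of `a 1` absorbs
it, and by induction every ratio lies in `(A, B)`. The same estimate makes `r` Cauchy with limit `α`
and `|r n - α| ≤ A (A - 1)⁻¹ / a (n + 1)`, i.e. `|a (n + 1) - α a n| ≤ (A - 1)⁻¹`. Then `a n α⁻ⁿ`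
has geometrically small increments; its limit `λ` satisfies
`|a n - λ αⁿ| ≤ (A - 1)⁻¹ (α - 1)⁻¹ < 1`, and `λ > 0` because `a 0 ≥ 1`.
-/

open Filter

/-- For a real number `x`, the distance from `x` to the nearest integer. -/
noncomputable def distNearestInt (x : ℝ) : ℝ := |x - round x|

open Finset Topology

lemma sum_range_inv_pow_succ_le {A : ℝ} (hA : 1 < A) (n : ℕ) :
    ∑ k ∈ range n, (A ^ (k + 1))⁻¹ ≤ (A - 1)⁻¹ := by
  have h := geom_sum_Ico_le_of_lt_one (m := 1) (n := n + 1)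
    (inv_nonneg.2 (by linarith : (0 : ℝ) ≤ A)) (inv_lt_one_of_one_lt₀ hA)
  rw [sum_Ico_eq_sum_range, Nat.add_sub_cancel] at h
  have hA0 : A ≠ 0 := by positivity
  have hA1 : A - 1 ≠ 0 := by linarith
  calc ∑ k ∈ range n, (A ^ (k + 1))⁻¹ = ∑ k ∈ range n, A⁻¹ ^ (1 + k) :=
        sum_congr rfl fun k _ => by rw [inv_pow, add_comm]
    _ ≤ A⁻¹ ^ 1 / (1 - A⁻¹) := h
    _ = (A - 1)⁻¹ := by field_simp

lemma abs_intCast_floor_add_sub_le (x : ℝ) {e : ℤ} (he : e = 0 ∨ e = 1) :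
    |((⌊x⌋ + e : ℤ) : ℝ) - x| ≤ 1 := by
  have he' : (0 : ℝ) ≤ e ∧ (e : ℝ) ≤ 1 := by rcases he with rfl | rfl <;> norm_num
  rw [abs_le]; push_cast
  constructor <;> linarith [Int.floor_le x, Int.sub_one_lt_floor x]

lemma abs_div_sub_div_le_inv {x y z : ℝ} (hx : 0 < x) (hy : 0 < y) (h : |z - y ^ 2 / x| ≤ 1) :
    |z / y - y / x| ≤ y⁻¹ := by
  have : z / y - y / x = (z - y ^ 2 / x) / y := by field_simp
  rw [this, abs_div, abs_of_pos hy, div_eq_mul_inv]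
  exact mul_le_of_le_one_left (inv_nonneg.2 hy.le) h

section InvGeometric

variable {X : Type*} [PseudoMetricSpace X] {r : ℕ → X} {w : ℕ → ℝ} {A : ℝ}

lemma dist_shift_le_inv_mul_geometric (hA : 1 < A) (hw : ∀ n, 0 < w n)
    (hgrow : ∀ n, A * w n ≤ w (n + 1)) (hr : ∀ n, dist (r n) (r (n + 1)) ≤ (w n)⁻¹) (n j : ℕ) :
    dist (r (j + n)) (r (j + 1 + n)) ≤ (w n)⁻¹ * A⁻¹ ^ j := by
  have hmono : w n * A ^ j ≤ w (j + n) := by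
    induction j with
    | zero => simp
    | succ j ih =>
      calc w n * A ^ (j + 1) = A * (w n * A ^ j) := by ring
        _ ≤ A * w (j + n) := by gcongr
        _ ≤ w (j + 1 + n) := by rw [Nat.add_right_comm]; exact hgrow _
  calc dist (r (j + n)) (r (j + 1 + n)) ≤ (w (j + n))⁻¹ := by
        rw [Nat.add_right_comm]; exact hr _
    _ ≤ (w n * A ^ j)⁻¹ := inv_anti₀ (by have := hw n; positivity) hmono
    _ = (w n)⁻¹ * A⁻¹ ^ j := by rw [mul_inv, inv_pow]

lemma cauchySeq_of_dist_succ_le_inv (hA : 1 < A) (hw : ∀ n, 0 < w n)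
    (hgrow : ∀ n, A * w n ≤ w (n + 1)) (hr : ∀ n, dist (r n) (r (n + 1)) ≤ (w n)⁻¹) :
    CauchySeq r :=
  cauchySeq_of_le_geometric _ _ (inv_lt_one_of_one_lt₀ hA)
    (dist_shift_le_inv_mul_geometric hA hw hgrow hr 0)

lemma dist_le_of_dist_succ_le_inv (hA : 1 < A) (hw : ∀ n, 0 < w n)
    (hgrow : ∀ n, A * w n ≤ w (n + 1)) (hr : ∀ n, dist (r n) (r (n + 1)) ≤ (w n)⁻¹)
    {a : X} (ha : Tendsto r atTop (𝓝 a)) (n : ℕ) :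
    dist (r n) a ≤ A * (A - 1)⁻¹ * (w n)⁻¹ := by
  have h := dist_le_of_le_geometric_of_tendsto₀ _ _ (inv_lt_one_of_one_lt₀ hA)
    (dist_shift_le_inv_mul_geometric hA hw hgrow hr n) (ha.comp (tendsto_add_atTop_nat n))
  rw [zero_add] at h
  have hA0 : A ≠ 0 := by positivity
  have hA1 : A - 1 ≠ 0 := by linarith
  convert h using 1
  field_simp

end InvGeometric

lemma exists_tendsto_mul_zpow_of_abs_sub_mul_le {u : ℕ → ℝ} {α c : ℝ} (hα : 1 < α)
    (hc : ∀ n, |u (n + 1) - α * u n| ≤ c) :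
    ∃ lam, Tendsto (fun n : ℕ => u n * α ^ (-(n : ℤ))) atTop (𝓝 lam) ∧
      ∀ n, |u n - lam * α ^ n| ≤ c * (α - 1)⁻¹ := by
  have hα0 : 0 < α := by linarith
  have hα0' : α ≠ 0 := hα0.ne'
  have hα1 : α - 1 ≠ 0 := by linarith
  have hv : ∀ n, dist (u n * α⁻¹ ^ n) (u (n + 1) * α⁻¹ ^ (n + 1)) ≤ c * α⁻¹ * α⁻¹ ^ n := by
    intro n
    have e : u (n + 1) * α⁻¹ ^ (n + 1) - u n * α⁻¹ ^ n = (u (n + 1) - α * u n) * α⁻¹ ^ (n + 1) := by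
      rw [pow_succ]; field_simp
    rw [dist_comm, Real.dist_eq, e, abs_mul, abs_of_pos (pow_pos (inv_pos.2 hα0) _), pow_succ]
    calc |u (n + 1) - α * u n| * (α⁻¹ ^ n * α⁻¹) ≤ c * (α⁻¹ ^ n * α⁻¹) := by gcongr; exact hc n
      _ = c * α⁻¹ * α⁻¹ ^ n := by ring
  have hr : α⁻¹ < 1 := inv_lt_one_of_one_lt₀ hα
  obtain ⟨lam, hlam⟩ := cauchySeq_tendsto_of_complete (cauchySeq_of_le_geometric _ _ hr hv)
  refine ⟨lam, by simpa only [zpow_neg, zpow_natCast, inv_pow] using hlam, fun n => ?_⟩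
  have h := dist_le_of_le_geometric_of_tendsto _ _ hr hv hlam n
  rw [Real.dist_eq] at h
  have e : u n - lam * α ^ n = (u n * α⁻¹ ^ n - lam) * α ^ n := by
    rw [inv_pow]; field_simp
  rw [e, abs_mul, abs_of_pos (pow_pos hα0 _)]
  calc |u n * α⁻¹ ^ n - lam| * α ^ n ≤ c * α⁻¹ * α⁻¹ ^ n / (1 - α⁻¹) * α ^ n := by gcongr
    _ = c * (α - 1)⁻¹ := by rw [inv_pow]; field_simp

section Recurrence

variable {u : ℕ → ℝ} {A B : ℝ}

lemma abs_ratio_sub_ratio_zero_le (hA : 1 < A) (hu0 : 0 < u 0)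
    (hstep : ∀ n, |u (n + 2) - u (n + 1) ^ 2 / u n| ≤ 1) {n : ℕ}
    (hgrow : ∀ k ≤ n, u 0 * A ^ k ≤ u k) :
    |u (n + 1) / u n - u 1 / u 0| ≤ (A - 1)⁻¹ / u 0 := by
  have hpos : ∀ k ≤ n, 0 < u k := fun k hk => lt_of_lt_of_le (by positivity) (hgrow k hk)
  calc |u (n + 1) / u n - u 1 / u 0|
      = |∑ k ∈ range n, (u (k + 2) / u (k + 1) - u (k + 1) / u k)| := by
        congr 1; exact (sum_range_sub (fun k => u (k + 1) / u k) n).symm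
    _ ≤ ∑ k ∈ range n, |u (k + 2) / u (k + 1) - u (k + 1) / u k| := abs_sum_le_sum_abs _ _
    _ ≤ ∑ k ∈ range n, (u 0)⁻¹ * (A ^ (k + 1))⁻¹ := sum_le_sum fun k hk => by
        have hk : k + 1 ≤ n := mem_range.1 hk
        calc _ ≤ (u (k + 1))⁻¹ :=
              abs_div_sub_div_le_inv (hpos k (by omega)) (hpos (k + 1) hk) (hstep k)
          _ ≤ (u 0 * A ^ (k + 1))⁻¹ := inv_anti₀ (by positivity) (hgrow _ hk)
          _ = _ := mul_inv _ _
    _ = (u 0)⁻¹ * ∑ k ∈ range n, (A ^ (k + 1))⁻¹ := (mul_sum _ _ _).symm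
    _ ≤ (u 0)⁻¹ * (A - 1)⁻¹ := by gcongr; exact sum_range_inv_pow_succ_le hA n
    _ = (A - 1)⁻¹ / u 0 := by ring

lemma boyd_ratio_bounds (hA : 1 < A) (hAB : A < B)
    (h1 : u 0 * A + (A - 1)⁻¹ < u 1 ∧ u 1 < u 0 * B - (A - 1)⁻¹)
    (hstep : ∀ n, |u (n + 2) - u (n + 1) ^ 2 / u n| ≤ 1) (n : ℕ) :
    0 < u n ∧ A * u n < u (n + 1) ∧ u (n + 1) < B * u n := by
  have hc : 0 < (A - 1)⁻¹ := inv_pos.2 (by linarith)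
  -- `h1` gives `u 0 * (B - A) > 2 * (A - 1)⁻¹ > 0`
  have hu0 : 0 < u 0 := by nlinarith
  have hlo : A < u 1 / u 0 - (A - 1)⁻¹ / u 0 := by rw [← sub_div, lt_div_iff₀ hu0]; linarith
  have hhi : u 1 / u 0 + (A - 1)⁻¹ / u 0 < B := by rw [← add_div, div_lt_iff₀ hu0]; linarith
  have hratio : ∀ n, (∀ k ≤ n, u 0 * A ^ k ≤ u k) →
      0 < u n ∧ A * u n < u (n + 1) ∧ u (n + 1) < B * u n := by
    intro n hgrow
    have hn : 0 < u n := lt_of_lt_of_le (by positivity) (hgrow n le_rfl)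
    have hd := abs_le.1 (abs_ratio_sub_ratio_zero_le hA hu0 hstep hgrow)
    exact ⟨hn, (lt_div_iff₀ hn).1 (by linarith), (div_lt_iff₀ hn).1 (by linarith)⟩
  have hgrow : ∀ n, ∀ k ≤ n, u 0 * A ^ k ≤ u k := by
    intro n
    induction n with
    | zero => intro k hk; simp [Nat.le_zero.1 hk]
    | succ n ih =>
      intro k hk
      rcases Nat.of_le_succ hk with hk | rfl
      · exact ih k hk
      · calc u 0 * A ^ (n + 1) = A * (u 0 * A ^ n) := by ring
          _ ≤ A * u n := by gcongr; exact ih n le_rfl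
          _ ≤ u (n + 1) := (hratio n ih).2.1.le
  exact hratio n (hgrow n)

lemma exists_tendsto_ratio (hA : 1 < A) (hpos : ∀ n, 0 < u n) (hgrow : ∀ n, A * u n ≤ u (n + 1))
    (hstep : ∀ n, |u (n + 2) - u (n + 1) ^ 2 / u n| ≤ 1) :
    ∃ α, Tendsto (fun n => u (n + 1) / u n) atTop (𝓝 α) ∧
      ∀ n, |u (n + 1) - α * u n| ≤ (A - 1)⁻¹ := by
  have hr : ∀ n, dist (u (n + 1) / u n) (u (n + 1 + 1) / u (n + 1)) ≤ (u (n + 1))⁻¹ := fun n => by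
    rw [dist_comm, Real.dist_eq]
    exact abs_div_sub_div_le_inv (hpos n) (hpos (n + 1)) (hstep n)
  have hw : ∀ n, 0 < u (n + 1) := fun n => hpos _
  have hgrow' : ∀ n, A * u (n + 1) ≤ u (n + 1 + 1) := fun n => hgrow _
  obtain ⟨α, hα⟩ := cauchySeq_tendsto_of_complete
    (cauchySeq_of_dist_succ_le_inv (w := fun n => u (n + 1)) hA hw hgrow' hr)
  refine ⟨α, hα, fun n => ?_⟩
  have h := dist_le_of_dist_succ_le_inv (w := fun n => u (n + 1)) hA hw hgrow' hr hα n
  rw [Real.dist_eq] at h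
  have hn := hpos n
  have hA0 : 0 < A := by linarith
  have hA1 : A - 1 ≠ 0 := by linarith
  calc |u (n + 1) - α * u n| = |u (n + 1) / u n - α| * u n := by
        rw [← abs_of_pos hn, ← abs_mul, abs_of_pos hn]; congr 1; field_simp
    _ ≤ A * (A - 1)⁻¹ * (u (n + 1))⁻¹ * u n := by gcongr
    _ ≤ A * (A - 1)⁻¹ * (A * u n)⁻¹ * u n := by
        have hc : 0 ≤ A * (A - 1)⁻¹ := mul_nonneg hA0.le (inv_nonneg.2 (by linarith))
        gcongr
        exact hgrow n
    _ = (A - 1)⁻¹ := by field_simp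

end Recurrence

theorem boyd_badly_distributed_powers
    (A B : ℝ) (hA : 3 < A) (hAB : A < B)
    (a : ℕ → ℤ)
    (ha1 : (a 0 : ℝ) * A + (A - 1)⁻¹ < (a 1 : ℝ) ∧ (a 1 : ℝ) < (a 0 : ℝ) * B - (A - 1)⁻¹)
    (f : ℕ → ℤ) (hf : ∀ n : ℕ, 1 ≤ n → f n = 0 ∨ f n = 1)
    (hrec : ∀ n : ℕ, 1 ≤ n → a (n + 1) = ⌊(a n : ℝ) ^ 2 / (a (n - 1) : ℝ)⌋ + f n) :
    ∃ α lam : ℝ,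
      Tendsto (fun n : ℕ => (a (n + 1) : ℝ) / (a n : ℝ)) atTop (nhds α) ∧
      A ≤ α ∧ α ≤ B ∧
      0 < lam ∧
      Tendsto (fun n : ℕ => (a n : ℝ) * α ^ (-(n : ℤ))) atTop (nhds lam) ∧
      ∀ n : ℕ, |(a n : ℝ) - lam * α ^ n| ≤ (A - 1)⁻¹ * (α - 1)⁻¹ ∧
        distNearestInt (lam * α ^ n) ≤ (A - 1)⁻¹ * (α - 1)⁻¹ := by
  have hA1 : 1 < A := by linarith
  have hstep : ∀ n, |(a (n + 2) : ℝ) - (a (n + 1) : ℝ) ^ 2 / a n| ≤ 1 := fun n => by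
    have h := hrec (n + 1) (by omega)
    rw [Nat.add_sub_cancel] at h
    rw [show n + 2 = n + 1 + 1 from rfl, h]
    exact abs_intCast_floor_add_sub_le _ (hf (n + 1) (by omega))
  have hbd := boyd_ratio_bounds (u := fun n => (a n : ℝ)) hA1 hAB ha1 hstep
  obtain ⟨α, hα, hαa⟩ :=
    exists_tendsto_ratio hA1 (fun n => (hbd n).1) (fun n => (hbd n).2.1.le) hstep
  have hAα : A ≤ α := ge_of_tendsto' hα fun n => (le_div_iff₀ (hbd n).1).2 (hbd n).2.1.le
  have hαB : α ≤ B := le_of_tendsto' hα fun n => (div_le_iff₀ (hbd n).1).2 (hbd n).2.2.le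
  obtain ⟨lam, hlam, hdist⟩ :=
    exists_tendsto_mul_zpow_of_abs_sub_mul_le (u := fun n => (a n : ℝ)) (by linarith) hαa
  have hsmall : (A - 1)⁻¹ * (α - 1)⁻¹ < 1 :=
    mul_lt_one_of_nonneg_of_lt_one_left (inv_nonneg.2 (by linarith))
      (inv_lt_one_of_one_lt₀ (by linarith)) (inv_le_one_of_one_le₀ (by linarith))
  have ha0 : (1 : ℝ) ≤ a 0 := by exact_mod_cast (show (0 : ℤ) < a 0 by exact_mod_cast (hbd 0).1)
  have hlam_pos : 0 < lam := by
    have h := abs_le.1 (hdist 0)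
    rw [pow_zero, mul_one] at h
    linarith
  refine ⟨α, lam, hα, hAα, hαB, hlam_pos, hlam, fun n => ⟨hdist n, ?_⟩⟩
  calc distNearestInt (lam * α ^ n) ≤ |lam * α ^ n - a n| := round_le _ _
    _ = |a n - lam * α ^ n| := abs_sub_comm _ _
    _ ≤ _ := hdist n
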